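/- For a Dyck path P of size n+1 with all peaks at odd height, area(P) is even if and only if the associated Motzkin path φ_A(P) has an even number of up steps. -/

import Mathlib

/-- A Dyck path of size `n`: a list of booleans (`true` = north step, `false` = east step)
from `(0,0)` to `(n,n)` staying weakly above the diagonal `y = x`. -/
def IsDyckPath (n : ℕ) (w : List Bool) : Prop :=
  w.length = 2 * n ∧ w.count true = n ∧
    ∀ k, (w.take k).count false ≤ (w.take k).count true

/-- The `y`-coordinate of the lattice point reached after `k` steps. -/
def ycoord (w : List Bool) (k : ℕ) : ℕ := (w.take k).count true

/-- The `x`-coordinate of the lattice point reached after `k` steps. -/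
def xcoord (w : List Bool) (k : ℕ) : ℕ := (w.take k).count false

/-- A peak: a north step at position `i` followed by an east step. -/
def IsPeak (w : List Bool) (i : ℕ) : Prop := w[i]? = some true ∧ w[i+1]? = some false

/-- A valley: an east step at position `i` followed by a north step. -/
def IsValley (w : List Bool) (i : ℕ) : Prop := w[i]? = some false ∧ w[i+1]? = some true

/-- Height above the diagonal after `k` steps. -/
def pdepth (w : List Bool) (k : ℕ) : ℤ := (ycoord w k : ℤ) - (xcoord w k : ℤ)

/-- Step `i` (a north step) of `w` is matched with step `j` (an east step):
the facing east step at the same height (balanced-parentheses matching). -/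
def Matches (w : List Bool) (i j : ℕ) : Prop :=
  i < j ∧ w[i]? = some true ∧ w[j]? = some false ∧
    pdepth w (j + 1) = pdepth w i ∧ ∀ k, i < k → k ≤ j → pdepth w i < pdepth w k

/-- The graph on `m` points whose edges are the upper arches and the lower arches;
its connected components are the components of the corresponding meander. -/
def meanderGraph (m : ℕ) (upper lower : ℕ → ℕ → Prop) : SimpleGraph (Fin m) where
  Adj i j := i ≠ j ∧ (upper i.1 j.1 ∨ upper j.1 i.1 ∨ lower i.1 j.1 ∨ lower j.1 i.1)
  symm := by
    constructor
    intro i j h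
    exact ⟨h.1.symm, by tauto⟩
  loopless := by
    constructor
    intro i h
    exact h.1 rfl

/-- The number of components of the meander with the matching of `P` above and the
matching of `Q` below. -/
noncomputable def trajPQ (n : ℕ) (P Q : List Bool) : ℕ :=
  Nat.card (meanderGraph (2 * n) (Matches P) (Matches Q)).ConnectedComponent

/-- The number of components of the meander with the matching of `P` above and the
rainbow matching `i ↦ 2n - 1 - i` below. -/
noncomputable def traj (n : ℕ) (P : List Bool) : ℕ :=
  Nat.card (meanderGraph (2 * n) (Matches P)
    (fun i j => i + j + 1 = 2 * n)).ConnectedComponent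

/-- No peak with even `y`-coordinate and no valley with odd `x`-coordinate. -/
def NoBadCorner (w : List Bool) : Prop :=
  (∀ i, IsPeak w i → Odd (ycoord w (i + 1))) ∧
  (∀ i, IsValley w i → Even (xcoord w (i + 1)))

/-- A bad corner: a peak with even `y`-coordinate or a valley with odd `x`-coordinate. -/
def IsBadCorner (w : List Bool) (i : ℕ) : Prop :=
  (IsPeak w i ∧ Even (ycoord w (i + 1))) ∨ (IsValley w i ∧ Odd (xcoord w (i + 1)))

/-- Interchange the two steps of the corner at positions `i`, `i+1`. -/
def swapCorner (w : List Bool) (i : ℕ) : List Bool :=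
  (w.set i (w.getD (i + 1) true)).set (i + 1) (w.getD i true)

open Classical in
/-- The involution `φ`: swap the two steps of the first bad corner, if any. -/
noncomputable def phiMap (w : List Bool) : List Bool :=
  if h : ∃ i, IsBadCorner w i then swapCorner w (Nat.find h) else w

/-- The number of unit squares between a Dyck path and the diagonal `y = x`. -/
def area (w : List Bool) : ℕ :=
  ((List.range w.length).map fun i =>
    if w.getD i true then 0 else ycoord w i - xcoord w i - 1).sum

/-- The zigzag Dyck path `(NE)^m`. -/
def zigzag (m : ℕ) : List Bool := (List.replicate m [true, false]).flatten

/-- `N^{2a_1} E^{2b_1} ⋯ N^{2a_t} E^{2b_t}` for `ab = [(a_1,b_1),…,(a_t,b_t)]`. -/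
def doubledWord (ab : List (ℕ × ℕ)) : List Bool :=
  (ab.map fun p => List.replicate (2 * p.1) true ++ List.replicate (2 * p.2) false).flatten

/-- `N^{a_1} E^{b_1} ⋯ N^{a_t} E^{b_t}` for `ab = [(a_1,b_1),…,(a_t,b_t)]`. -/
def halfWord (ab : List (ℕ × ℕ)) : List Bool :=
  (ab.map fun p => List.replicate p.1 true ++ List.replicate p.2 false).flatten

/-- All peaks at odd height (`height` = `y - x` at the peak's lattice point). -/
def AllPeaksOdd (w : List Bool) : Prop :=
  ∀ i, IsPeak w i → Odd (ycoord w (i + 1) - xcoord w (i + 1))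

/-- All peaks at even height. -/
def AllPeaksEven (w : List Bool) : Prop :=
  ∀ i, IsPeak w i → Even (ycoord w (i + 1) - xcoord w (i + 1))

/-- Steps of a Motzkin path: up, horizontal, down. -/
inductive MStep | U | H | D
deriving DecidableEq

/-- The total height change along a list of Motzkin steps. -/
def msum (l : List MStep) : ℤ :=
  (l.map fun s => match s with | MStep.U => 1 | MStep.H => 0 | MStep.D => -1).sum

/-- A Motzkin path of length `n`. -/
def IsMotzkin (n : ℕ) (l : List MStep) : Prop :=
  l.length = n ∧ msum l = 0 ∧ ∀ k, 0 ≤ msum (l.take k)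

/-- A Riordan path of length `n`: a Motzkin path with no horizontal step on the `x`-axis. -/
def IsRiordan (n : ℕ) (l : List MStep) : Prop :=
  IsMotzkin n l ∧ ∀ i, l[i]? = some MStep.H → msum (l.take i) ≠ 0

/-- The map `φ_A` from Dyck paths of size `n+1` (all peaks at odd height)
to Motzkin paths of length `n`: `v_j` is read off from steps `p_{2j} p_{2j+1}`. -/
def phiA (n : ℕ) (P : List Bool) : List MStep :=
  (List.range n).map fun j =>
    match P.getD (2 * j + 1) true, P.getD (2 * j + 2) true with
    | true, true => MStep.U
    | false, true => MStep.H
    | _, _ => MStep.D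

/-- The map `φ_B` from Dyck paths of size `n` (all peaks at even height)
to Riordan paths of length `n`: `u_j` is read off from steps `p_{2j-1} p_{2j}`. -/
def phiB (n : ℕ) (P : List Bool) : List MStep :=
  (List.range n).map fun j =>
    match P.getD (2 * j) true, P.getD (2 * j + 1) true with
    | true, true => MStep.U
    | false, true => MStep.H
    | _, _ => MStep.D

/-!
Positions are counted from `0`. The east step at position `i` adds
`y - x - 1 ≡ x + y + 1 = i + 1 (mod 2)` to the area, so `area P` is congruent to the number of
east steps at even positions. The path starts with `N`, so these are the east steps at positions
`2j+2`, i.e. exactly the `D` steps of `φ_A(P)`. Peaks at odd height exclude the pair `NE` at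
positions `2j+1, 2j+2`, so the letters `U`, `H`, `D` carry `2`, `1`, `0` north steps; as the `2n`
interior steps contain `n` north steps, `φ_A(P)` returns to height `0` and has as many `U` as
`D` steps.
-/

open Finset

theorem Finset.sum_range_two_mul_succ {M : Type*} [AddCommMonoid M] (f : ℕ → M) (n : ℕ) :
    ∑ i ∈ range (2 * (n + 1)), f i =
      f 0 + f (2 * n + 1) + ∑ j ∈ range n, (f (2 * j + 1) + f (2 * j + 2)) := by
  induction n with
  | zero => simp [sum_range_succ]
  | succ n ih =>
    rw [show 2 * (n + 1 + 1) = 2 * (n + 1) + 1 + 1 by ring, sum_range_succ, sum_range_succ, ih,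
      sum_range_succ, mul_add_one 2 n]
    abel

theorem List.sum_map_range {M : Type*} [AddCommMonoid M] (f : ℕ → M) (n : ℕ) :
    ((List.range n).map f).sum = ∑ i ∈ Finset.range n, f i :=
  rfl

theorem List.getElem?_eq_some_getD {α : Type*} {l : List α} {i : ℕ} (d : α) (hi : i < l.length) :
    l[i]? = some (l.getD i d) := by
  rw [List.getD_eq_getElem _ _ hi, List.getElem?_eq_getElem hi]

theorem List.count_map_range {α : Type*} [DecidableEq α] (f : ℕ → α) (a : α) (n : ℕ) :
    ((List.range n).map f).count a = ∑ i ∈ Finset.range n, if f i = a then 1 else 0 := by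
  induction n with
  | zero => rfl
  | succ n ih =>
    rw [List.range_succ, List.map_append, List.count_append, ih, Finset.sum_range_succ]
    simp [List.count_singleton]

theorem List.count_true_eq_sum_range (l : List Bool) :
    l.count true = ∑ i ∈ Finset.range l.length, if l.getD i true then 1 else 0 := by
  induction l with
  | nil => rfl
  | cons b l ih =>
    rw [List.length_cons, Finset.sum_range_succ', List.count_cons, ih]
    cases b <;> simp

section Coordinates

variable {w : List Bool} {i : ℕ}

theorem ycoord_add_xcoord (hi : i ≤ w.length) : ycoord w i + xcoord w i = i := by
  rw [ycoord, xcoord, List.count_true_add_count_false, List.length_take, min_eq_left hi]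

theorem take_add_one_eq_append_getD (hi : i < w.length) :
    w.take (i + 1) = w.take i ++ [w.getD i true] := by
  rw [List.take_add_one, List.getElem?_eq_some_getD true hi]
  rfl

theorem ycoord_add_one (hi : i < w.length) :
    ycoord w (i + 1) = ycoord w i + if w.getD i true then 1 else 0 := by
  rw [ycoord, ycoord, take_add_one_eq_append_getD hi, List.count_append]
  cases w.getD i true <;> rfl

theorem xcoord_add_one (hi : i < w.length) :
    xcoord w (i + 1) = xcoord w i + if w.getD i true then 0 else 1 := by
  rw [xcoord, xcoord, take_add_one_eq_append_getD hi, List.count_append]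
  cases w.getD i true <;> rfl

theorem xcoord_lt_ycoord_of_getD_eq_false (hw : ∀ k, xcoord w k ≤ ycoord w k)
    (hi : i < w.length) (he : w.getD i true = false) : xcoord w i < ycoord w i := by
  have := hw (i + 1)
  rw [ycoord_add_one hi, xcoord_add_one hi, he] at this
  simpa using this

theorem getD_zero_of_forall_xcoord_le (hw : ∀ k, xcoord w k ≤ ycoord w k) :
    w.getD 0 true = true := by
  cases w with
  | nil => rfl
  | cons b l =>
    have := hw 1
    cases b <;> simp_all [xcoord, ycoord]

theorem AllPeaksOdd.getD_add_one_of_odd (h : AllPeaksOdd w)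
    (hi : Odd i) (hlt : i + 1 < w.length) (hN : w.getD i true = true) :
    w.getD (i + 1) true = true := by
  by_contra hE
  simp only [Bool.not_eq_true] at hE
  have hpeak : IsPeak w i :=
    ⟨hN ▸ List.getElem?_eq_some_getD true (by omega), hE ▸ List.getElem?_eq_some_getD true hlt⟩
  obtain ⟨m, hm⟩ := h i hpeak
  obtain ⟨k, hk⟩ := hi
  have hxy := ycoord_add_xcoord hlt.le
  omega

theorem area_modEq_sum_even_east (hw : ∀ k, xcoord w k ≤ ycoord w k) :
    area w ≡ ∑ i ∈ range w.length, if Even i ∧ w.getD i true = false then 1 else 0 [MOD 2] := by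
  have harea : area w =
      ∑ i ∈ range w.length, if w.getD i true then 0 else ycoord w i - xcoord w i - 1 :=
    List.sum_map_range _ _
  rw [harea]
  refine Nat.ModEq.sum fun i hi => ?_
  rw [mem_range] at hi
  cases he : w.getD i true
  · have hlt := xcoord_lt_ycoord_of_getD_eq_false hw hi he
    have hxy := ycoord_add_xcoord hi.le
    simp only [Bool.false_eq_true, if_false, and_true, Nat.even_iff]
    split_ifs <;> unfold Nat.ModEq <;> omega
  · simp only [if_true, Bool.true_eq_false, and_false, if_false]
    rfl

end Coordinates

theorem count_D_phiA (n : ℕ) (P : List Bool) :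
    (phiA n P).count MStep.D = ∑ j ∈ range n, if P.getD (2 * j + 2) true = false then 1 else 0 := by
  rw [phiA, List.count_map_range]
  refine sum_congr rfl fun j _ => ?_
  cases P.getD (2 * j + 1) true <;> cases P.getD (2 * j + 2) true <;> rfl

theorem msum_eq_count_U_sub_count_D (l : List MStep) :
    msum l = l.count MStep.U - l.count MStep.D := by
  induction l with
  | nil => rfl
  | cons s l ih =>
    simp only [msum, List.map_cons, List.sum_cons, List.count_cons] at ih ⊢
    cases s <;> simp [ih] <;> ring

namespace IsDyckPath

variable {n : ℕ} {P : List Bool}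

theorem getD_last (hP : IsDyckPath (n + 1) P) : P.getD (2 * n + 1) true = false := by
  obtain ⟨hlen, hcount, hw⟩ := hP
  have hlt : 2 * n + 1 < P.length := by omega
  have hy : ycoord P (2 * n + 1 + 1) = n + 1 := by
    rw [ycoord, List.take_of_length_le (by omega), hcount]
  by_contra hN
  simp only [Bool.not_eq_false] at hN
  rw [ycoord_add_one hlt, hN, if_pos rfl] at hy
  have hxy := ycoord_add_xcoord hlt.le
  have hle : xcoord P (2 * n + 1) ≤ ycoord P (2 * n + 1) := hw _
  omega

theorem sum_north_pairs (hP : IsDyckPath (n + 1) P) :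
    ∑ j ∈ range n, ((if P.getD (2 * j + 1) true then 1 else 0) +
      (if P.getD (2 * j + 2) true then 1 else 0)) = n := by
  have hcount := List.count_true_eq_sum_range P
  rw [hP.2.1, hP.1, sum_range_two_mul_succ, getD_zero_of_forall_xcoord_le hP.2.2,
    hP.getD_last] at hcount
  simp only [if_true, Bool.false_eq_true, if_false, add_zero] at hcount
  omega

theorem area_modEq_count_D (hP : IsDyckPath (n + 1) P) :
    area P ≡ (phiA n P).count MStep.D [MOD 2] := by
  have hsum : ∑ i ∈ range P.length, (if Even i ∧ P.getD i true = false then 1 else 0) =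
      ∑ j ∈ range n, if P.getD (2 * j + 2) true = false then 1 else 0 := by
    rw [hP.1, sum_range_two_mul_succ, getD_zero_of_forall_xcoord_le hP.2.2]
    simp [Nat.even_add_one]
  rw [count_D_phiA, ← hsum]
  exact area_modEq_sum_even_east hP.2.2

theorem msum_phiA (hP : IsDyckPath (n + 1) P) (h : AllPeaksOdd P) : msum (phiA n P) = 0 := by
  rw [msum, phiA, List.map_map, List.sum_map_range]
  trans ∑ j ∈ range n, (((if P.getD (2 * j + 1) true then 1 else 0) +
    (if P.getD (2 * j + 2) true then 1 else 0) : ℕ) - 1 : ℤ)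
  · refine sum_congr rfl fun j hj => ?_
    have hlt : 2 * j + 1 + 1 < P.length := by rw [hP.1]; linarith [mem_range.mp hj]
    have hpeak := h.getD_add_one_of_odd ⟨j, rfl⟩ hlt
    cases ha : P.getD (2 * j + 1) true <;> cases hb : P.getD (2 * j + 2) true <;> simp_all
  · rw [sum_sub_distrib, ← Nat.cast_sum, hP.sum_north_pairs]
    simp

end IsDyckPath

/-- For a Dyck path `P` of size `n+1` with all peaks at odd height, `area(P)` is even iff
the Motzkin path `φ_A(P)` has an even number of up steps. -/
theorem area_parity_phiA (n : ℕ) (P : List Bool) (hP : IsDyckPath (n + 1) P)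
    (h : AllPeaksOdd P) :
    (Even (area P) ↔ Even ((phiA n P).count MStep.U)) := by
  have hUD : (phiA n P).count MStep.U = (phiA n P).count MStep.D := by
    have hmsum := msum_eq_count_U_sub_count_D (phiA n P)
    rw [hP.msum_phiA h] at hmsum
    omega
  rw [Nat.even_iff, Nat.even_iff, hUD, hP.area_modEq_count_D]
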